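/- Critical ratio limit via renewal decomposition: let A be the adjacency matrix of a d-regular graph G with transient SRW, o a fixed vertex, σ = σ* = d/f_{oo}(1/d), and H = A + σ1_o1_o*. Writing q_{xo}(k) for the probability that SRW from x first hits o at time k and h(l) = (H^l)_{oo}/d^l, one has (H^n)_{ox}/d^n = ∑_{k+l=n} q_{xo}(k) h(l), and if ∑_l h(l) = ∞ then (∑_{k=0}^{n-1}(H^k)_{ox}/d^k) / (∑_{k=0}^{n-1} h(k)) → ∑_{l=0}^∞ q_{xo}(l) = f_{ox}(1/d)/f_{oo}(1/d) as n → ∞. -/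

import Mathlib

open Filter Topology Classical

open Classical in
noncomputable def matPow {V : Type*} (M : V → V → ℝ) : ℕ → V → V → ℝ
  | 0 => fun x y => if x = y then 1 else 0
  | n+1 => fun x y => ∑' z, M x z * matPow M n z y

open Classical in
/-- The matrix `A` with the row and column of `o` removed (used to count walks avoiding
`o`). -/
noncomputable def avoidMat {V : Type*} (A : V → V → ℝ) (o : V) : V → V → ℝ :=
  fun x y => if x = o ∨ y = o then 0 else A x y

open Classical in
/-- `q_{xo}(k)`: the probability that simple random walk on the `d`-regular graph with
adjacency `A`, started at `x ≠ o`, hits `o` for the first time at time `k`. -/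
noncomputable def firstHit {V : Type*} (A : V → V → ℝ) (d : ℝ) (o x : V) (k : ℕ) : ℝ :=
  if k = 0 then 0 else (∑' z, matPow (avoidMat A o) (k-1) x z * A z o) / d^k

/-!
Cutting a walk from `x ≠ o` at its first visit to `o`, before which `H` and `A` agree, gives
`(H^n)_{xo} = ∑_k F_x(k) (H^{n-k})_{oo}`; by symmetry of `H` this is the convolution identity.
Cutting a walk from `o` at its first return to `o` shows that `h` is a renewal sequence
`h = δ₀ + r ⋆ h`, where `r` is the first-return distribution of the walk plus the extra mass
`σ/d = 1/f_{oo}(1/d)` at time `1`. Transience means that the walk returns with total mass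
`1 - 1/f_{oo}(1/d)`, so `r` has mass at most `1` and therefore `h ≤ 1`. Then the partial sums `S`
of `h` satisfy `S(n-k)/S(n) → 1` once they diverge, and dominated convergence in
`∑_k q(k) S(n-k)/S(n)` gives the limit. Its value comes from the convolution identity for `A`
itself, summed as a Cauchy product.
-/

open Function Finset

theorem sum_range_conv_eq_sum_mul_sum_range (u v : ℕ → ℝ) (N : ℕ) :
    ∑ n ∈ range N, ∑ j ∈ range (n + 1), u j * v (n - j)
      = ∑ j ∈ range N, u j * ∑ l ∈ range (N - j), v l := by
  rw [sum_comm' (t' := range N) (s' := fun j => Ico j N)]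
  · refine sum_congr rfl fun j _ => ?_
    rw [mul_sum, sum_Ico_eq_sum_range]
    simp only [Nat.add_sub_cancel_left]
  · intro n j
    simp only [mem_range, mem_Ico]
    omega

theorem le_one_of_renewal {u r : ℕ → ℝ} (hr : 0 ≤ r) (hr0 : r 0 = 0)
    (hmass : ∀ N, ∑ j ∈ range N, r j ≤ 1)
    (hu : ∀ n, u n = (if n = 0 then 1 else 0) + ∑ j ∈ range (n + 1), r j * u (n - j))
    (n : ℕ) : u n ≤ 1 := by
  induction n using Nat.strong_induction_on with
  | _ n ih =>
    rcases n with _ | n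
    · exact (show u 0 = 1 by simpa [hr0] using hu 0).le
    rw [hu, if_neg n.succ_ne_zero, zero_add]
    calc ∑ j ∈ range (n + 2), r j * u (n + 1 - j) ≤ ∑ j ∈ range (n + 2), r j := by
          refine sum_le_sum fun j _ => ?_
          rcases j with _ | j
          · simp [hr0]
          · exact mul_le_of_le_one_right (hr _) (ih _ (by omega))
      _ ≤ 1 := hmass _

theorem one_add_sum_mul_le_of_renewal {u p : ℕ → ℝ} {f : ℝ} (hu0 : 0 ≤ u) (hp : 0 ≤ p)
    (hf : HasSum u f)
    (hu : ∀ n, u n = (if n = 0 then 1 else 0) + ∑ j ∈ range (n + 1), p j * u (n - j))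
    (K : ℕ) : 1 + (∑ j ∈ range K, p j) * f ≤ f := by
  set S : ℕ → ℝ := fun N => ∑ n ∈ range N, u n
  have hS : Tendsto S atTop (𝓝 f) := hf.tendsto_sum_nat
  have hS_mono : Monotone S := fun m n hmn =>
    sum_le_sum_of_subset_of_nonneg (range_subset_range.2 hmn) fun i _ _ => hu0 i
  have hS_eq : ∀ N, 0 < N → S N = 1 + ∑ j ∈ range N, p j * S (N - j) := by
    intro N hN
    simp only [S]
    rw [sum_congr rfl fun n _ => hu n, sum_add_distrib, sum_ite_eq' (range N) 0,
      if_pos (mem_range.2 hN), sum_range_conv_eq_sum_mul_sum_range]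
  have hlower : ∀ᶠ N in atTop, 1 + (∑ j ∈ range K, p j) * S (N - K) ≤ S N := by
    filter_upwards [eventually_gt_atTop K] with N hN
    rw [hS_eq N (by omega), sum_mul]
    gcongr 1 + ?_
    calc ∑ j ∈ range K, p j * S (N - K) ≤ ∑ j ∈ range K, p j * S (N - j) :=
          sum_le_sum fun j hj =>
            mul_le_mul_of_nonneg_left (hS_mono (by rw [mem_range] at hj; omega)) (hp j)
      _ ≤ ∑ j ∈ range N, p j * S (N - j) :=
          sum_le_sum_of_subset_of_nonneg (range_subset_range.2 hN.le) fun j _ _ =>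
            mul_nonneg (hp j) (sum_nonneg fun l _ => hu0 l)
  exact le_of_tendsto_of_tendsto
    (((hS.comp (tendsto_sub_atTop_nat K)).const_mul _).const_add 1) hS hlower

theorem tendsto_sum_range_sub_div_sum_range {h : ℕ → ℝ} (h0 : 0 ≤ h) (h1 : ∀ n, h n ≤ 1)
    (hdiv : ¬Summable h) (k : ℕ) :
    Tendsto (fun n => (∑ l ∈ range (n - k), h l) / ∑ l ∈ range n, h l) atTop (𝓝 1) := by
  have hS : Tendsto (fun n => ∑ l ∈ range n, h l) atTop atTop :=
    (not_summable_iff_tendsto_nat_atTop_of_nonneg h0).1 hdiv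
  have hlow : Tendsto (fun n => 1 - k / ∑ l ∈ range n, h l) atTop (𝓝 1) := by
    simpa using (hS.const_div_atTop (k : ℝ)).const_sub 1
  refine tendsto_of_tendsto_of_tendsto_of_le_of_le' hlow tendsto_const_nhds ?_ ?_
  · filter_upwards [hS.eventually_gt_atTop 0] with n hn
    have hgap : ∑ l ∈ range n, h l - ∑ l ∈ range (n - k), h l ≤ k := by
      rw [← sum_range_add_sum_Ico _ (Nat.sub_le n k), add_sub_cancel_left]
      calc ∑ l ∈ Ico (n - k) n, h l ≤ (Ico (n - k) n).card • (1 : ℝ) :=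
            sum_le_card_nsmul _ _ 1 fun l _ => h1 l
        _ ≤ k := by
            rw [Nat.card_Ico, nsmul_one]
            exact_mod_cast (by omega : n - (n - k) ≤ k)
    rw [one_sub_div hn.ne']
    gcongr
    linarith
  · filter_upwards [hS.eventually_gt_atTop 0] with n hn
    exact div_le_one_of_le₀ (sum_le_sum_of_subset_of_nonneg
      (range_subset_range.2 (Nat.sub_le n k)) fun l _ _ => h0 l) hn.le

theorem tendsto_sum_mul_div_of_tendsto_ratio {q S : ℕ → ℝ} (hq : Summable q) (hq0 : 0 ≤ q)
    (hS0 : 0 ≤ S) (hS : Monotone S)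
    (hratio : ∀ k, Tendsto (fun n => S (n - k) / S n) atTop (𝓝 1)) :
    Tendsto (fun n => (∑ j ∈ range n, q j * S (n - j)) / S n) atTop (𝓝 (∑' j, q j)) := by
  set F : ℕ → ℕ → ℝ := fun n =>
    (range n : Set ℕ).indicator fun j => q j * (S (n - j) / S n)
  have hF : ∀ n, ∑' j, F n j = (∑ j ∈ range n, q j * S (n - j)) / S n := by
    intro n
    rw [← sum_eq_tsum_indicator, sum_div]
    simp only [mul_div_assoc]
  refine (tendsto_tsum_of_dominated_convergence hq (fun j => ?_) ?_).congr hF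
  · have : Tendsto (fun n => q j * (S (n - j) / S n)) atTop (𝓝 (q j)) := by
      simpa using (hratio j).const_mul (q j)
    refine this.congr' ?_
    filter_upwards [eventually_gt_atTop j] with n hn
    simp [F, hn]
  · refine Eventually.of_forall fun n j => ?_
    by_cases hj : j < n
    · simp only [F, coe_range, Set.mem_Iio, hj, Set.indicator_of_mem, Real.norm_eq_abs]
      rw [abs_of_nonneg (mul_nonneg (hq0 j) (div_nonneg (hS0 _) (hS0 _)))]
      exact mul_le_of_le_one_right (hq0 j) (div_le_one_of_le₀ (hS (Nat.sub_le n j)) (hS0 n))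
    · simpa [F, hj] using hq0 j

theorem tendsto_sum_range_conv_div_sum_range {q h : ℕ → ℝ} (hq : Summable q) (hq0 : 0 ≤ q)
    (h0 : 0 ≤ h) (h1 : ∀ n, h n ≤ 1) (hdiv : ¬Summable h) :
    Tendsto (fun n => (∑ m ∈ range n, ∑ k ∈ range (m + 1), q k * h (m - k))
        / ∑ m ∈ range n, h m) atTop (𝓝 (∑' k, q k)) := by
  simp_rw [sum_range_conv_eq_sum_mul_sum_range]
  exact tendsto_sum_mul_div_of_tendsto_ratio (S := fun n => ∑ l ∈ range n, h l) hq hq0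
    (fun n => sum_nonneg fun m _ => h0 m)
    (fun m n hmn => sum_le_sum_of_subset_of_nonneg (range_subset_range.2 hmn) fun l _ _ => h0 l)
    (tendsto_sum_range_sub_div_sum_range h0 h1 hdiv)

section Walks

variable {V : Type*}

theorem matPow_zero (M : V → V → ℝ) (x y : V) :
    matPow M 0 x y = if x = y then 1 else 0 := rfl

theorem matPow_succ (M : V → V → ℝ) (n : ℕ) (x y : V) :
    matPow M (n + 1) x y = ∑' z, M x z * matPow M n z y := rfl

def RowFinite (M : V → V → ℝ) : Prop := ∀ x, (support (M x)).Finite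

namespace RowFinite

variable {M N : V → V → ℝ}

theorem summable_mul (hM : RowFinite M) (x : V) (g : V → ℝ) :
    Summable fun z => M x z * g z :=
  summable_of_hasFiniteSupport <| (hM x).subset fun z hz h0 => hz (by simp [h0])

theorem tsum_mul_tsum_assoc (hM : RowFinite M) (hN : RowFinite N) (x : V) (g : V → ℝ) :
    ∑' z, M x z * ∑' u, N z u * g u = ∑' u, (∑' z, M x z * N z u) * g u := by
  have hfin : (support (uncurry fun z u => M x z * (N z u * g u))).Finite := by
    refine ((hM x).prod ((hM x).biUnion fun z _ => hN z)).subset fun ⟨z, u⟩ h => ?_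
    have hMz : M x z ≠ 0 := fun h0 => h (by simp [h0])
    have hNu : N z u ≠ 0 := fun h0 => h (by simp [h0])
    exact ⟨hMz, Set.mem_biUnion hMz hNu⟩
  simp_rw [← tsum_mul_left, ← tsum_mul_right, mul_assoc]
  exact (summable_of_hasFiniteSupport hfin).tsum_comm.symm

end RowFinite

theorem rowFinite_matPow {M : V → V → ℝ} (hM : RowFinite M) (n : ℕ) :
    RowFinite (matPow M n) := by
  induction n with
  | zero =>
    refine fun x => (Set.finite_singleton x).subset fun y hy => ?_
    by_contra h
    exact hy (if_neg (Ne.symm h))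
  | succ n ih =>
    refine fun x => ((hM x).biUnion fun z _ => ih z).subset fun y hy => ?_
    by_contra h
    simp only [Set.mem_iUnion, mem_support, not_exists, not_not] at h
    refine hy ((tsum_congr fun z => ?_).trans tsum_zero)
    by_cases hz : M x z = 0
    · simp [hz]
    · simp [h z hz]

theorem matPow_succ' {M : V → V → ℝ} (hM : RowFinite M) (n : ℕ) (x y : V) :
    matPow M (n + 1) x y = ∑' z, matPow M n x z * M z y := by
  induction n generalizing x with
  | zero => simp [matPow_succ, matPow_zero]
  | succ n ih =>
    rw [matPow_succ]
    simp_rw [ih]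
    rw [hM.tsum_mul_tsum_assoc (rowFinite_matPow hM n) x (M · y)]
    rfl

theorem matPow_symm {M : V → V → ℝ} (hM : RowFinite M) (hs : ∀ a b, M a b = M b a) (n : ℕ)
    (x y : V) : matPow M n x y = matPow M n y x := by
  induction n generalizing x y with
  | zero => simp [matPow_zero, eq_comm]
  | succ n ih =>
    rw [matPow_succ, matPow_succ' hM]
    exact tsum_congr fun z => by rw [hs x z, ih z y, mul_comm]

theorem matPow_nonneg {M : V → V → ℝ} (h : ∀ a b, 0 ≤ M a b) (n : ℕ) (x y : V) :
    0 ≤ matPow M n x y := by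
  induction n generalizing x with
  | zero => rw [matPow_zero]; split <;> norm_num
  | succ n ih => exact tsum_nonneg fun z => mul_nonneg (h x z) (ih z)

theorem tsum_matPow {M : V → V → ℝ} {d : ℝ} (hM : RowFinite M)
    (hreg : ∀ x, ∑' y, M x y = d) (n : ℕ) (x : V) : ∑' y, matPow M n x y = d ^ n := by
  induction n generalizing x with
  | zero => simp [matPow_zero]
  | succ n ih =>
    have := (rowFinite_matPow hM n).tsum_mul_tsum_assoc hM x fun _ => 1
    simp only [mul_one, hreg, ← matPow_succ' hM] at this
    rw [← this, tsum_mul_right, ih, pow_succ]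

section FirstPassage

variable {A : V → V → ℝ} {o : V}

variable (A o) in
noncomputable def firstPassage (w : V) (k : ℕ) : ℝ :=
  if k = 0 then 0 else ∑' z, matPow (avoidMat A o) (k - 1) w z * A z o

variable (A o) in
/-- Weight of the walks from `o` that first return to `o` at step `j`, when the loop at `o`
carries weight `m`. -/
noncomputable def returnWeight (m : ℝ) (j : ℕ) : ℝ :=
  (if j = 1 then m else 0) + ∑' z, if z = o then 0 else A o z * firstPassage A o z (j - 1)

theorem RowFinite.avoidMat (hA : RowFinite A) : RowFinite (avoidMat A o) :=
  fun w => (hA w).subset fun z hz h0 => hz (by simp [_root_.avoidMat, h0])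

theorem avoidMat_nonneg (hA : ∀ a b, 0 ≤ A a b) (w z : V) : 0 ≤ avoidMat A o w z := by
  unfold avoidMat; split
  · exact le_rfl
  · exact hA w z

theorem matPow_avoidMat_apply_self (n : ℕ) {z : V} (hz : z ≠ o) :
    matPow (avoidMat A o) n z o = 0 := by
  induction n generalizing z with
  | zero => exact if_neg hz
  | succ n ih =>
    refine (tsum_congr fun u => ?_).trans tsum_zero
    by_cases hu : u = o
    · simp [hu, avoidMat]
    · rw [ih hu, mul_zero]

@[simp] theorem firstPassage_zero (w : V) : firstPassage A o w 0 = 0 := if_pos rfl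

theorem firstPassage_nonneg (hA : ∀ a b, 0 ≤ A a b) (w : V) (k : ℕ) :
    0 ≤ firstPassage A o w k := by
  unfold firstPassage; split
  · exact le_rfl
  · exact tsum_nonneg fun z => mul_nonneg (matPow_nonneg (avoidMat_nonneg hA) _ _ _) (hA z o)

theorem firstPassage_succ (hA : RowFinite A) (w : V) (k : ℕ) :
    firstPassage A o w (k + 1)
      = (if k = 0 then A w o else 0) + ∑' z, avoidMat A o w z * firstPassage A o z k := by
  rcases k with _ | k
  · simp [firstPassage, matPow_zero]
  · simp only [firstPassage, Nat.add_sub_cancel, if_neg k.succ_ne_zero, zero_add, matPow_succ]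
    exact (hA.avoidMat.tsum_mul_tsum_assoc (rowFinite_matPow hA.avoidMat k) w (A · o)).symm

@[simp] theorem returnWeight_zero (m : ℝ) : returnWeight A o m 0 = 0 := by
  simp [returnWeight]

theorem returnWeight_succ (m : ℝ) (j : ℕ) :
    returnWeight A o m (j + 1)
      = (if j = 0 then m else 0) + ∑' z, if z = o then 0 else A o z * firstPassage A o z j := by
  simp [returnWeight]

theorem returnWeight_nonneg (hAnn : ∀ a b, 0 ≤ A a b) {m : ℝ} (hm : 0 ≤ m) (j : ℕ) :
    0 ≤ returnWeight A o m j :=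
  add_nonneg (by split_ifs <;> simp [hm]) <| tsum_nonneg fun z => by
    split_ifs
    · exact le_rfl
    · exact mul_nonneg (hAnn o z) (firstPassage_nonneg hAnn z _)

theorem returnWeight_add (m s : ℝ) (j : ℕ) :
    returnWeight A o (m + s) j = returnWeight A o m j + if j = 1 then s else 0 := by
  unfold returnWeight
  split_ifs <;> ring

end FirstPassage

section Decomposition

variable {A M : V → V → ℝ} {o : V}

theorem matPow_eq_avoidMat_add_sum_firstPassage (hA : RowFinite A)
    (hM : ∀ w z, w ≠ o → M w z = A w z) (n : ℕ) {w : V} (hw : w ≠ o) (y : V) :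
    matPow M n w y = matPow (avoidMat A o) n w y
      + ∑ k ∈ range (n + 1), firstPassage A o w k * matPow M (n - k) o y := by
  induction n generalizing w with
  | zero => simp [matPow_zero]
  | succ n ih =>
    set B := avoidMat A o
    have hB : RowFinite B := hA.avoidMat
    have hsplit : matPow M (n + 1) w y
        = A w o * matPow M n o y + ∑' z, B w z * matPow M n z y := by
      simp_rw [matPow_succ, hM w _ hw]
      rw [(hA.summable_mul w _).tsum_eq_add_tsum_ite o]
      congr 1
      refine tsum_congr fun z => ?_
      by_cases hz : z = o
      · simp [hz, B, avoidMat]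
      · simp [hz, hw, B, avoidMat]
    have hstep : ∑' z, B w z * matPow M n z y = matPow B (n + 1) w y
        + ∑ k ∈ range (n + 1),
            (∑' z, B w z * firstPassage A o z k) * matPow M (n - k) o y := by
      have hih : ∀ z, B w z * matPow M n z y = B w z * matPow B n z y
          + ∑ k ∈ range (n + 1), B w z * firstPassage A o z k * matPow M (n - k) o y := by
        intro z
        by_cases hz : z = o
        · simp [hz, B, avoidMat]
        · simp only [ih hz, mul_add, mul_sum, mul_assoc]
      rw [tsum_congr hih, (hB.summable_mul w _).tsum_add
          (summable_sum fun k _ => (hB.summable_mul w _).mul_right _),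
        Summable.tsum_finsetSum fun k _ => (hB.summable_mul w _).mul_right _]
      simp_rw [tsum_mul_right]
      rfl
    rw [hsplit, hstep, sum_range_succ' (fun k => firstPassage A o w k * matPow M (n + 1 - k) o y),
      firstPassage_zero, zero_mul, add_zero]
    simp_rw [firstPassage_succ hA, add_mul, sum_add_distrib, Nat.add_sub_add_right]
    simp only [ite_mul, zero_mul, sum_ite_eq', mem_range, Nat.zero_lt_succ, if_true,
      Nat.sub_zero]
    ring

theorem matPow_self_eq_sum_returnWeight (hA : RowFinite A) (hMfin : RowFinite M)
    (hM : ∀ a b, a ≠ o ∨ b ≠ o → M a b = A a b) (n : ℕ) :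
    matPow M n o o = (if n = 0 then 1 else 0)
      + ∑ j ∈ range (n + 1), returnWeight A o (M o o) j * matPow M (n - j) o o := by
  rcases n with _ | n
  · simp [matPow_zero]
  have hterm : ∀ z, (if z = o then 0 else M o z * matPow M n z o)
      = ∑ k ∈ range (n + 1), (if z = o then 0 else A o z * firstPassage A o z k)
          * matPow M (n - k) o o := by
    intro z
    by_cases hz : z = o
    · simp [hz]
    · simp only [if_neg hz, hM o z (Or.inr hz),
        matPow_eq_avoidMat_add_sum_firstPassage hA (fun w z hw => hM w z (Or.inl hw)) n hz,
        matPow_avoidMat_apply_self n hz, zero_add, mul_sum, mul_assoc]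
  have hsummable : ∀ k, Summable fun z =>
      (if z = o then 0 else A o z * firstPassage A o z k) * matPow M (n - k) o o :=
    fun k => summable_of_hasFiniteSupport <| (hA o).subset fun z hz h0 => hz (by simp [h0])
  rw [matPow_succ, (hMfin.summable_mul o _).tsum_eq_add_tsum_ite o, tsum_congr hterm,
    Summable.tsum_finsetSum fun k _ => hsummable k,
    sum_range_succ' (fun j => returnWeight A o (M o o) j * matPow M (n + 1 - j) o o)]
  simp_rw [returnWeight_succ, add_mul, sum_add_distrib, tsum_mul_right, Nat.add_sub_add_right]
  simp

end Decomposition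

section SimpleRandomWalk

variable {A M : V → V → ℝ} {d : ℝ} {o x : V}

theorem firstHit_eq_firstPassage_div (k : ℕ) :
    firstHit A d o x k = firstPassage A o x k / d ^ k := by
  unfold firstHit firstPassage
  split_ifs <;> simp

theorem firstHit_nonneg (hAnn : ∀ a b, 0 ≤ A a b) (hd : 0 ≤ d) (k : ℕ) :
    0 ≤ firstHit A d o x k := by
  rw [firstHit_eq_firstPassage_div]
  exact div_nonneg (firstPassage_nonneg hAnn x k) (pow_nonneg hd k)

theorem sum_range_firstHit_le_one (hA : RowFinite A) (hAnn : ∀ a b, 0 ≤ A a b)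
    (hreg : ∀ x, ∑' y, A x y = d) (hd : 0 < d) (hx : x ≠ o) (n : ℕ) :
    ∑ k ∈ range n, firstHit A d o x k ≤ 1 := by
  rcases n with _ | n
  · simp
  have hmass : ∑' y, matPow (avoidMat A o) n x y
      + ∑ k ∈ range (n + 1), firstPassage A o x k * d ^ (n - k) = d ^ n := by
    have hsum : ∀ k ∈ range (n + 1),
        Summable fun y => firstPassage A o x k * matPow A (n - k) o y :=
      fun k _ => (summable_of_hasFiniteSupport (rowFinite_matPow hA _ o)).mul_left _
    rw [← tsum_matPow hA hreg n x, tsum_congr fun y =>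
        matPow_eq_avoidMat_add_sum_firstPassage hA (fun _ _ _ => rfl) n hx y,
      Summable.tsum_add (summable_of_hasFiniteSupport (rowFinite_matPow hA.avoidMat n x))
        (summable_sum hsum), Summable.tsum_finsetSum hsum]
    congr 1
    refine sum_congr rfl fun k _ => ?_
    rw [tsum_mul_left, tsum_matPow hA hreg]
  have hterm : ∀ k ∈ range (n + 1),
      firstHit A d o x k = firstPassage A o x k * d ^ (n - k) / d ^ n := by
    intro k hk
    rw [firstHit_eq_firstPassage_div, ← pow_sub_mul_pow d (Nat.le_of_lt_succ (mem_range.1 hk))]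
    field_simp
  rw [sum_congr rfl hterm, ← sum_div, div_le_one (pow_pos hd n)]
  have hB : 0 ≤ ∑' y, matPow (avoidMat A o) n x y :=
    tsum_nonneg fun y => matPow_nonneg (avoidMat_nonneg hAnn) n x y
  linarith

theorem one_le_tsum_matPow_div_pow (hAnn : ∀ a b, 0 ≤ A a b) (hd : 0 ≤ d)
    (htrans : Summable fun n => matPow A n o o / d ^ n) :
    1 ≤ ∑' n, matPow A n o o / d ^ n := by
  simpa [matPow_zero] using
    htrans.le_tsum 0 fun n _ => div_nonneg (matPow_nonneg hAnn n o o) (pow_nonneg hd n)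

theorem summable_firstHit (hA : RowFinite A) (hAnn : ∀ a b, 0 ≤ A a b)
    (hreg : ∀ x, ∑' y, A x y = d) (hd : 0 < d) (hx : x ≠ o) : Summable (firstHit A d o x) :=
  summable_of_sum_range_le (fun k => firstHit_nonneg hAnn hd.le k)
    (sum_range_firstHit_le_one hA hAnn hreg hd hx)

theorem matPow_div_pow_eq_sum_firstHit (hA : RowFinite A) (hMfin : RowFinite M)
    (hMsymm : ∀ a b, M a b = M b a) (hM : ∀ w z, w ≠ o → M w z = A w z) (hx : x ≠ o)
    (n : ℕ) :
    matPow M n o x / d ^ n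
      = ∑ k ∈ range (n + 1), firstHit A d o x k * (matPow M (n - k) o o / d ^ (n - k)) := by
  rw [matPow_symm hMfin hMsymm, matPow_eq_avoidMat_add_sum_firstPassage hA hM n hx,
    matPow_avoidMat_apply_self n hx, zero_add, sum_div]
  refine sum_congr rfl fun k hk => ?_
  rw [firstHit_eq_firstPassage_div, div_mul_div_comm, ← pow_add,
    Nat.add_sub_cancel' (Nat.le_of_lt_succ (mem_range.1 hk))]

theorem matPow_self_div_pow_eq_sum_returnWeight (hA : RowFinite A) (hMfin : RowFinite M)
    (hM : ∀ a b, a ≠ o ∨ b ≠ o → M a b = A a b) (n : ℕ) :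
    matPow M n o o / d ^ n = (if n = 0 then 1 else 0)
      + ∑ j ∈ range (n + 1),
          returnWeight A o (M o o) j / d ^ j * (matPow M (n - j) o o / d ^ (n - j)) := by
  rw [matPow_self_eq_sum_returnWeight hA hMfin hM, add_div, sum_div]
  congr 1
  · split_ifs <;> simp [*]
  · refine sum_congr rfl fun j hj => ?_
    rw [div_mul_div_comm, ← pow_add, Nat.add_sub_cancel' (Nat.le_of_lt_succ (mem_range.1 hj))]

end SimpleRandomWalk

section Critical

variable {A : V → V → ℝ} {o x : V} {d σ : ℝ}

variable (A o σ) in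
noncomputable def addLoop : V → V → ℝ := fun a b => A a b + if a = o ∧ b = o then σ else 0

theorem addLoop_of_ne {a b : V} (h : a ≠ o ∨ b ≠ o) : addLoop A o σ a b = A a b := by
  simp only [addLoop, add_eq_left, ite_eq_right_iff]
  tauto

theorem addLoop_self : addLoop A o σ o o = A o o + σ := by simp [addLoop]

theorem RowFinite.addLoop (hA : RowFinite A) : RowFinite (addLoop A o σ) :=
  fun a => ((hA a).union (Set.finite_singleton o)).subset fun b hb => by
    by_cases h : b = o
    · exact Or.inr h
    · exact Or.inl fun h0 => hb (by rw [addLoop_of_ne (Or.inr h), h0])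

theorem addLoop_symm (hAsymm : ∀ a b, A a b = A b a) (a b : V) :
    addLoop A o σ a b = addLoop A o σ b a := by
  simp only [addLoop, hAsymm a b, and_comm]

theorem addLoop_nonneg (hAnn : ∀ a b, 0 ≤ A a b) (hσ : 0 ≤ σ) (a b : V) :
    0 ≤ addLoop A o σ a b :=
  add_nonneg (hAnn a b) (by split_ifs <;> simp [hσ])

theorem critical_loop_nonneg (hAnn : ∀ a b, 0 ≤ A a b) (hd : 0 < d)
    (htrans : Summable fun n => matPow A n o o / d ^ n)
    (hσ : σ = d / ∑' n, matPow A n o o / d ^ n) : 0 ≤ σ :=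
  hσ ▸ div_nonneg hd.le (zero_le_one.trans (one_le_tsum_matPow_div_pow hAnn hd.le htrans))

theorem sum_range_returnWeight_critical_le_one (hA : RowFinite A) (hAnn : ∀ a b, 0 ≤ A a b)
    (hd : 0 < d) (htrans : Summable fun n => matPow A n o o / d ^ n)
    (hσ : σ = d / ∑' n, matPow A n o o / d ^ n) (K : ℕ) :
    ∑ j ∈ range K, returnWeight A o (A o o + σ) j / d ^ j ≤ 1 := by
  have hmass := one_add_sum_mul_le_of_renewal
    (fun n => div_nonneg (matPow_nonneg hAnn n o o) (pow_nonneg hd.le n))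
    (fun j => div_nonneg (returnWeight_nonneg hAnn (hAnn o o) j) (pow_nonneg hd.le j))
    htrans.hasSum (matPow_self_div_pow_eq_sum_returnWeight hA hA fun _ _ _ => rfl) K
  set f := ∑' n, matPow A n o o / d ^ n
  have hf : 1 ≤ f := one_le_tsum_matPow_div_pow hAnn hd.le htrans
  have hloop : ∑ j ∈ range K, (if j = 1 then σ else 0) / d ^ j ≤ 1 / f := by
    simp only [ite_div, zero_div, sum_ite_eq', pow_one]
    split_ifs
    · rw [hσ, div_div_cancel_left' hd.ne', one_div]
    · positivity
  have hreturn : ∑ j ∈ range K, returnWeight A o (A o o) j / d ^ j ≤ 1 - 1 / f := by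
    rw [one_sub_div (by positivity), le_div_iff₀ (by positivity)]
    linarith
  simp only [returnWeight_add, add_div, sum_add_distrib]
  linarith

theorem matPow_addLoop_critical_div_pow_le_one (hA : RowFinite A) (hAnn : ∀ a b, 0 ≤ A a b)
    (hd : 0 < d) (htrans : Summable fun n => matPow A n o o / d ^ n)
    (hσ : σ = d / ∑' n, matPow A n o o / d ^ n) (n : ℕ) :
    matPow (addLoop A o σ) n o o / d ^ n ≤ 1 := by
  refine le_one_of_renewal (u := fun n => matPow (addLoop A o σ) n o o / d ^ n)
    (r := fun j => returnWeight A o (A o o + σ) j / d ^ j)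
    (fun j => div_nonneg (returnWeight_nonneg hAnn
      (add_nonneg (hAnn o o) (critical_loop_nonneg hAnn hd htrans hσ)) j) (pow_nonneg hd.le j))
    (by simp) (sum_range_returnWeight_critical_le_one hA hAnn hd htrans hσ) (fun m => ?_) n
  rw [← addLoop_self]
  exact matPow_self_div_pow_eq_sum_returnWeight hA hA.addLoop (fun _ _ => addLoop_of_ne) m

theorem tsum_firstHit_mul_tsum (hA : RowFinite A) (hAsymm : ∀ a b, A a b = A b a)
    (hAnn : ∀ a b, 0 ≤ A a b) (hreg : ∀ x, ∑' y, A x y = d) (hd : 0 < d) (hx : x ≠ o)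
    (htrans : Summable fun n => matPow A n o o / d ^ n) :
    (∑' k, firstHit A d o x k) * ∑' n, matPow A n o o / d ^ n
      = ∑' n, matPow A n o x / d ^ n := by
  have hq := summable_firstHit hA hAnn hreg hd hx
  rw [hq.tsum_mul_tsum_eq_tsum_sum_range htrans (hq.mul_of_nonneg htrans
    (fun k => firstHit_nonneg hAnn hd.le k)
    fun n => div_nonneg (matPow_nonneg hAnn n o o) (pow_nonneg hd.le n))]
  exact tsum_congr fun n =>
    (matPow_div_pow_eq_sum_firstHit hA hA hAsymm (fun _ _ _ => rfl) hx n).symm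

end Critical

end Walks

open Classical in
theorem critical_renewal_ratio_limit_general
    {V : Type*} (A : V → V → ℝ) (d : ℝ) (hd : 0 < d)
    (hAsymm : ∀ x y, A x y = A y x)
    (hAnn : ∀ x y, 0 ≤ A x y)
    (hloc : ∀ x, (Function.support (A x)).Finite)
    (hreg : ∀ x, ∑' y, A x y = d)
    (o x : V) (hx : x ≠ o)
    (htrans : Summable (fun n : ℕ => matPow A n o o / d^n))
    (σ : ℝ) (hσ : σ = d / ∑' n : ℕ, matPow A n o o / d^n)
    (H : V → V → ℝ)
    (hH : H = fun a b => A a b + if a = o ∧ b = o then σ else 0) :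
    (∀ n : ℕ, matPow H n o x / d^n
        = ∑ k ∈ Finset.range (n+1),
            firstHit A d o x k * (matPow H (n-k) o o / d^(n-k))) ∧
    (¬ Summable (fun l : ℕ => matPow H l o o / d^l) →
      Summable (firstHit A d o x) ∧
      Tendsto (fun n : ℕ =>
          (∑ k ∈ Finset.range n, matPow H k o x / d^k)
            / (∑ k ∈ Finset.range n, matPow H k o o / d^k))
        atTop (𝓝 (∑' l : ℕ, firstHit A d o x l)) ∧
      (∑' l : ℕ, firstHit A d o x l)
          = (∑' n : ℕ, matPow A n o x / d^n) / (∑' n : ℕ, matPow A n o o / d^n)) := by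
  obtain rfl : H = addLoop A o σ := hH
  have hA : RowFinite A := hloc
  have hconv : ∀ n, matPow (addLoop A o σ) n o x / d ^ n = ∑ k ∈ range (n + 1),
      firstHit A d o x k * (matPow (addLoop A o σ) (n - k) o o / d ^ (n - k)) :=
    matPow_div_pow_eq_sum_firstHit hA hA.addLoop (addLoop_symm hAsymm)
      (fun _ _ hw => addLoop_of_ne (Or.inl hw)) hx
  have hq := summable_firstHit hA hAnn hreg hd hx
  refine ⟨hconv, fun hdiv => ⟨hq, ?_, ?_⟩⟩
  · simp_rw [hconv]
    exact tendsto_sum_range_conv_div_sum_range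
      (h := fun l => matPow (addLoop A o σ) l o o / d ^ l) hq
      (fun k => firstHit_nonneg hAnn hd.le k)
      (fun n => div_nonneg (matPow_nonneg (addLoop_nonneg hAnn
        (critical_loop_nonneg hAnn hd htrans hσ)) n o o) (pow_nonneg hd.le n))
      (matPow_addLoop_critical_div_pow_le_one hA hAnn hd htrans hσ) hdiv
  · rw [eq_div_iff (zero_lt_one.trans_le (one_le_tsum_matPow_div_pow hAnn hd.le htrans)).ne',
      tsum_firstHit_mul_tsum hA hAsymm hAnn hreg hd hx htrans]

open Classical in
/-- critical ratio limit via renewal decomposition. Let `G` be `d`-regular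
with transient SRW, `σ = σ* = d/f_{oo}(1/d)`, `H = A + σ1_o1_o*`, `h(l) = (H^l)_{oo}/d^l`
and `q_{xo}(k)` the first-hitting probabilities. Then
`(H^n)_{ox}/d^n = ∑_{k+l=n} q_{xo}(k)h(l)`, and if `∑_l h(l) = ∞` then
`(∑_{k<n}(H^k)_{ox}/d^k)/(∑_{k<n}h(k)) → ∑_l q_{xo}(l) = f_{ox}(1/d)/f_{oo}(1/d)`. -/
theorem critical_renewal_ratio_limit
    {V : Type*} (A : V → V → ℝ) (d : ℝ) (hd : 0 < d)
    (hAsymm : ∀ x y, A x y = A y x)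
    (hAnn : ∀ x y, 0 ≤ A x y)
    (hloc : ∀ x, (Function.support (A x)).Finite)
    (hreg : ∀ x, ∑' y, A x y = d)
    (hconn : ∀ x y : V, ∃ n : ℕ, 0 < matPow A n x y)
    (o x : V) (hx : x ≠ o)
    (htrans : Summable (fun n : ℕ => matPow A n o o / d^n))
    (σ : ℝ) (hσ : σ = d / ∑' n : ℕ, matPow A n o o / d^n)
    (H : V → V → ℝ)
    (hH : H = fun a b => A a b + if a = o ∧ b = o then σ else 0) :
    (∀ n : ℕ, matPow H n o x / d^n
        = ∑ k ∈ Finset.range (n+1),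
            firstHit A d o x k * (matPow H (n-k) o o / d^(n-k))) ∧
    (¬ Summable (fun l : ℕ => matPow H l o o / d^l) →
      Summable (firstHit A d o x) ∧
      Tendsto (fun n : ℕ =>
          (∑ k ∈ Finset.range n, matPow H k o x / d^k)
            / (∑ k ∈ Finset.range n, matPow H k o o / d^k))
        atTop (𝓝 (∑' l : ℕ, firstHit A d o x l)) ∧
      (∑' l : ℕ, firstHit A d o x l)
          = (∑' n : ℕ, matPow A n o x / d^n) / (∑' n : ℕ, matPow A n o o / d^n)) :=
  critical_renewal_ratio_limit_general A d hd hAsymm hAnn hloc hreg o x hx htrans σ hσ H hH
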